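/- Let f:(0,∞)→ℝ be twice differentiable, strictly convex with f(1)=0, binary f-divergence g, and d ∈ [0,1). For the two-element probability measures R_√d = ((1-√d)/2, (1+√d)/2) and R_√d† = ((1+√d)/2, (1-√d)/2), one has Δ(R_√d, R_√d†) = d and (1/2)(D_f(R_√d‖R_√d†) + D_f(R_√d†‖R_√d)) = g(√d). Hence if g'(t)/t is non-decreasing, the minimum of the symmetrized f-divergence over all pairs (P,Q) with Δ(P,Q)=d equals g(√d). -/

import Mathlib

open Real Set MeasureTheory

/-- The binary f-divergence. -/
noncomputable def gbin (f : ℝ → ℝ) (t : ℝ) : ℝ :=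
  ((1 - t) / 2) * f ((1 + t) / (1 - t)) + ((1 + t) / 2) * f ((1 - t) / (1 + t))


lemma gbin_even (f : ℝ → ℝ) (t : ℝ) : gbin f (-t) = gbin f t := by
  unfold gbin; ring_nf

lemma gbin_diff (f : ℝ → ℝ) (hd1 : ∀ x ∈ Ioi (0:ℝ), DifferentiableAt ℝ f x)
    (t : ℝ) (ht : t ∈ Ioo (-1:ℝ) 1) : DifferentiableAt ℝ (gbin f) t := by
  obtain ⟨h1, h2⟩ := ht
  have h1t : (0:ℝ) < 1 - t := by linarith
  have h2t : (0:ℝ) < 1 + t := by linarith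
  have d1 : DifferentiableAt ℝ (fun u : ℝ => (1 + u) / (1 - u)) t := by
    apply DifferentiableAt.div <;> [fun_prop; fun_prop; exact ne_of_gt h1t]
  have d2 : DifferentiableAt ℝ (fun u : ℝ => (1 - u) / (1 + u)) t := by
    apply DifferentiableAt.div <;> [fun_prop; fun_prop; exact ne_of_gt h2t]
  have e1 : DifferentiableAt ℝ (fun u : ℝ => f ((1 + u) / (1 - u))) t :=
    (hd1 _ (mem_Ioi.mpr (by positivity))).comp t d1
  have e2 : DifferentiableAt ℝ (fun u : ℝ => f ((1 - u) / (1 + u))) t :=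
    (hd1 _ (mem_Ioi.mpr (by positivity))).comp t d2
  unfold gbin
  exact ((by fun_prop : DifferentiableAt ℝ (fun u:ℝ => (1-u)/2) t).mul e1).add
    ((by fun_prop : DifferentiableAt ℝ (fun u:ℝ => (1+u)/2) t).mul e2)

lemma gbin_nonneg (f : ℝ → ℝ) (hconv : StrictConvexOn ℝ (Ioi (0:ℝ)) f) (hf1 : f 1 = 0)
    (t : ℝ) (ht : t ∈ Ioo (-1:ℝ) 1) : 0 ≤ gbin f t := by
  obtain ⟨h1, h2⟩ := ht
  have h1t : (0:ℝ) < 1 - t := by linarith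
  have h2t : (0:ℝ) < 1 + t := by linarith
  have hx : (1 + t) / (1 - t) ∈ Ioi (0:ℝ) := mem_Ioi.mpr (by positivity)
  have hy : (1 - t) / (1 + t) ∈ Ioi (0:ℝ) := mem_Ioi.mpr (by positivity)
  have := hconv.convexOn.2 hx hy (by positivity : (0:ℝ) ≤ (1-t)/2)
    (by positivity : (0:ℝ) ≤ (1+t)/2) (by ring)
  simp only [smul_eq_mul] at this
  have harg : (1 - t) / 2 * ((1 + t) / (1 - t)) + (1 + t) / 2 * ((1 - t) / (1 + t)) = 1 := by
    field_simp; ring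
  rw [harg, hf1] at this
  unfold gbin; linarith

lemma pointwiseA (f : ℝ → ℝ) (p q : ℝ) (hp : 0 < p) (hq : 0 < q) :
    q * f (p / q) + p * f (q / p) = (p + q) * gbin f ((p - q) / (p + q)) := by
  have hpq : (0:ℝ) < p + q := by linarith
  have hr2 : 1 - (p - q) / (p + q) = 2 * q / (p + q) := by field_simp; ring
  have hr1 : 1 + (p - q) / (p + q) = 2 * p / (p + q) := by field_simp; ring
  have e1 : (1 + (p - q) / (p + q)) / (1 - (p - q) / (p + q)) = p / q := by
    rw [hr1, hr2, div_div_div_eq]; rw [div_eq_div_iff (by positivity) (by positivity)]; ring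
  have e2 : (1 - (p - q) / (p + q)) / (1 + (p - q) / (p + q)) = q / p := by
    rw [hr1, hr2, div_div_div_eq]; rw [div_eq_div_iff (by positivity) (by positivity)]; ring
  unfold gbin
  rw [e1, e2, hr1, hr2]
  field_simp

lemma tangent (f : ℝ → ℝ) (hconv : StrictConvexOn ℝ (Ioi (0:ℝ)) f)
    (hd1 : ∀ x ∈ Ioi (0:ℝ), DifferentiableAt ℝ f x) (hf1 : f 1 = 0)
    (mono : MonotoneOn (fun t => deriv (gbin f) t / t) (Ioo (0:ℝ) 1))
    (d : ℝ) (hd : d ∈ Ico (0:ℝ) 1) (r : ℝ) (hr : r ∈ Ioo (-1:ℝ) 1) :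
    gbin f (Real.sqrt d) +
      (if d = 0 then 0 else deriv (gbin f) (Real.sqrt d) / (2 * Real.sqrt d)) * (r ^ 2 - d)
      ≤ gbin f r := by
  obtain ⟨hd0, hd1'⟩ := hd
  rcases eq_or_lt_of_le hd0 with h0 | h0
  · obtain rfl : d = 0 := h0.symm
    have hg0 : gbin f 0 = 0 := by unfold gbin; norm_num [hf1]
    rw [if_pos rfl, Real.sqrt_zero, hg0]
    simpa using gbin_nonneg f hconv hf1 r hr
  · rw [if_neg (ne_of_gt h0)]
    set s := Real.sqrt d with hs
    have hs0 : 0 < s := Real.sqrt_pos.mpr h0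
    have hs1 : s < 1 := by
      rw [hs, show (1:ℝ) = Real.sqrt 1 by simp]
      exact Real.sqrt_lt_sqrt hd0 hd1'
    have hd_eq : d = s ^ 2 := (Real.sq_sqrt hd0).symm
    set C := deriv (gbin f) s / (2 * s) with hC
    -- reduce to r ∈ [0, 1)
    suffices h : ∀ r' : ℝ, r' ∈ Ico (0:ℝ) 1 → gbin f s + C * (r' ^ 2 - d) ≤ gbin f r' by
      rcases le_or_gt 0 r with hr0 | hr0
      · exact h r ⟨hr0, hr.2⟩
      · have := h (-r) ⟨by linarith, by linarith [hr.1]⟩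
        rwa [gbin_even, neg_pow, show ((-1:ℝ))^2 = 1 by norm_num, one_mul] at this
    intro r ⟨hr0, hr1⟩
    -- φ u = gbin f u - C u²
    set φ : ℝ → ℝ := fun u => gbin f u - C * u ^ 2 with hφ
    have hφdiff : ∀ u ∈ Ioo (-1:ℝ) 1, DifferentiableAt ℝ φ u := fun u hu =>
      (gbin_diff f hd1 u hu).sub (by fun_prop)
    have hφderiv : ∀ u ∈ Ioo (-1:ℝ) 1, deriv φ u = deriv (gbin f) u - 2 * C * u := by
      intro u hu
      rw [hφ, deriv_fun_sub (gbin_diff f hd1 u hu) (by fun_prop), deriv_const_mul _ (by fun_prop)]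
      simp [mul_comm]; ring
    have hφcont : ContinuousOn φ (Icc (min r s) (max r s)) := by
      intro u hu
      have hu' : u ∈ Ioo (-1:ℝ) 1 := by
        obtain ⟨h1, h2⟩ := hu
        constructor
        · have := (le_min hr0 hs0.le).trans h1; linarith
        · exact lt_of_le_of_lt h2 (max_lt hr1 hs1)
      exact (hφdiff u hu').continuousAt.continuousWithinAt
    have key : φ s ≤ φ r := by
      rcases lt_trichotomy r s with hlt | heq | hgt
      · -- antitone on [r, s]
        have := antitoneOn_of_deriv_nonpos (convex_Icc r s)
          (by rw [min_eq_left hlt.le, max_eq_right hlt.le] at hφcont; exact hφcont)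
          (fun u hu => by
            rw [interior_Icc] at hu
            exact (hφdiff u ⟨by linarith [hu.1], by linarith [hu.2]⟩).differentiableWithinAt)
          (fun u hu => by
            rw [interior_Icc] at hu
            obtain ⟨hu1, hu2⟩ := hu
            have hu0 : 0 < u := lt_of_le_of_lt hr0 hu1
            have hmem : u ∈ Ioo (0:ℝ) 1 := ⟨hu0, by linarith⟩
            have hsmem : s ∈ Ioo (0:ℝ) 1 := ⟨hs0, hs1⟩
            have hmono := mono hmem hsmem hu2.le
            rw [hφderiv u ⟨by linarith, by linarith⟩]
            have : deriv (gbin f) u ≤ (deriv (gbin f) s / s) * u :=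
              (div_le_iff₀ hu0).mp hmono
            have hC2 : 2 * C * u = (deriv (gbin f) s / s) * u := by
              rw [hC]; field_simp
            linarith)
        exact this (left_mem_Icc.mpr hlt.le) (right_mem_Icc.mpr hlt.le) hlt.le
      · rw [heq]
      · -- monotone on [s, r]
        have := monotoneOn_of_deriv_nonneg (convex_Icc s r)
          (by rw [min_eq_right hgt.le, max_eq_left hgt.le] at hφcont; exact hφcont)
          (fun u hu => by
            rw [interior_Icc] at hu
            exact (hφdiff u ⟨by linarith [hs0, hu.1], by linarith [hu.2]⟩).differentiableWithinAt)
          (fun u hu => by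
            rw [interior_Icc] at hu
            obtain ⟨hu1, hu2⟩ := hu
            have hu0 : 0 < u := hs0.trans hu1
            have hmem : u ∈ Ioo (0:ℝ) 1 := ⟨hu0, by linarith⟩
            have hsmem : s ∈ Ioo (0:ℝ) 1 := ⟨hs0, hs1⟩
            have hmono := mono hsmem hmem hu1.le
            rw [hφderiv u ⟨by linarith, by linarith⟩]
            have : (deriv (gbin f) s / s) * u ≤ deriv (gbin f) u :=
              (le_div_iff₀ hu0).mp hmono
            have hC2 : 2 * C * u = (deriv (gbin f) s / s) * u := by
              rw [hC]; field_simp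
            linarith)
        exact this (left_mem_Icc.mpr hgt.le) (right_mem_Icc.mpr hgt.le) hgt.le
    have : gbin f s - C * s ^ 2 ≤ gbin f r - C * r ^ 2 := key
    rw [hd_eq]; linarith


theorem binary_attains_min_under_triangular (f : ℝ → ℝ)
    (hconv : StrictConvexOn ℝ (Ioi (0:ℝ)) f)
    (hd1 : ∀ x ∈ Ioi (0:ℝ), DifferentiableAt ℝ f x)
    (hd2 : ∀ x ∈ Ioi (0:ℝ), DifferentiableAt ℝ (deriv f) x)
    (hf1 : f 1 = 0)
    (d : ℝ) (hd : d ∈ Ico (0:ℝ) 1) :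
    -- with t = √d, the pair (R_t, R_t†) satisfies Δ(R_t, R_t†) = d
    ((1 / 2) * (((1 - Real.sqrt d) / 2 - (1 + Real.sqrt d) / 2) ^ 2 /
          ((1 - Real.sqrt d) / 2 + (1 + Real.sqrt d) / 2) +
        ((1 + Real.sqrt d) / 2 - (1 - Real.sqrt d) / 2) ^ 2 /
          ((1 + Real.sqrt d) / 2 + (1 - Real.sqrt d) / 2)) = d) ∧
    -- and its symmetrized f-divergence equals g(√d)
    ((1 / 2) * ((((1 + Real.sqrt d) / 2) * f (((1 - Real.sqrt d) / 2) / ((1 + Real.sqrt d) / 2)) +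
          ((1 - Real.sqrt d) / 2) * f (((1 + Real.sqrt d) / 2) / ((1 - Real.sqrt d) / 2))) +
        (((1 - Real.sqrt d) / 2) * f (((1 + Real.sqrt d) / 2) / ((1 - Real.sqrt d) / 2)) +
          ((1 + Real.sqrt d) / 2) * f (((1 - Real.sqrt d) / 2) / ((1 + Real.sqrt d) / 2)))) =
        gbin f (Real.sqrt d)) ∧
    -- hence, if g'(t)/t is non-decreasing, g(√d) is the minimum of the symmetrized
    -- f-divergence over all pairs (P,Q) with Δ(P,Q) = d
    (MonotoneOn (fun t => deriv (gbin f) t / t) (Ioo (0:ℝ) 1) →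
      ∀ (X : Type) (_ : MeasurableSpace X) (μ : Measure X) (p q : X → ℝ),
        Measurable p → Measurable q → (∀ x, 0 < p x) → (∀ x, 0 < q x) →
        (∫ x, p x ∂μ) = 1 → (∫ x, q x ∂μ) = 1 →
        Integrable (fun x => q x * f (p x / q x)) μ →
        Integrable (fun x => p x * f (q x / p x)) μ →
        Integrable (fun x => (p x - q x) ^ 2 / (p x + q x)) μ →
        (1 / 2) * ∫ x, (p x - q x) ^ 2 / (p x + q x) ∂μ = d →
        (1 / 2) * ((∫ x, q x * f (p x / q x) ∂μ) + (∫ x, p x * f (q x / p x) ∂μ))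
          ≥ gbin f (Real.sqrt d)) := by
  obtain ⟨hd0, hdlt⟩ := hd
  set t := Real.sqrt d with hts
  have ht0 : 0 ≤ t := Real.sqrt_nonneg d
  have ht1 : t < 1 := by
    rw [hts, show (1:ℝ) = Real.sqrt 1 by simp]
    exact Real.sqrt_lt_sqrt hd0 hdlt
  have ht2 : t ^ 2 = d := Real.sq_sqrt hd0
  have h1t : (0:ℝ) < 1 - t := by linarith
  have h2t : (0:ℝ) < 1 + t := by linarith
  refine ⟨?_, ?_, ?_⟩
  · -- triangular discrimination value
    have e : (1 - t) / 2 + (1 + t) / 2 = 1 := by ring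
    rw [show ((1-t)/2 - (1+t)/2 : ℝ) = -t by ring, show ((1+t)/2 - (1-t)/2 : ℝ) = t by ring,
      e, show ((1+t)/2 + (1-t)/2 : ℝ) = 1 by ring]
    rw [div_one, div_one, neg_pow]
    norm_num
    linarith [ht2]
  · -- symmetrized divergence equals gbin
    have e1 : ((1 - t) / 2) / ((1 + t) / 2) = (1 - t) / (1 + t) := by
      rw [div_div_div_eq, div_eq_div_iff (by positivity) (by positivity)]; ring
    have e2 : ((1 + t) / 2) / ((1 - t) / 2) = (1 + t) / (1 - t) := by
      rw [div_div_div_eq, div_eq_div_iff (by positivity) (by positivity)]; ring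
    rw [e1, e2]
    unfold gbin
    ring
  · -- the minimization claim
    intro mono X mX μ p q hpm hqm hp hq hip hiq hI1 hI2 hI3 hΔ
    set C : ℝ := if d = 0 then 0 else deriv (gbin f) t / (2 * t) with hCdef
    have hpint : Integrable p μ := by
      by_contra h; rw [integral_undef h] at hip; norm_num at hip
    have hqint : Integrable q μ := by
      by_contra h; rw [integral_undef h] at hiq; norm_num at hiq
    have hJ3 : (∫ x, (p x - q x) ^ 2 / (p x + q x) ∂μ) = 2 * d := by linarith
    -- pointwise bound
    have hpt : ∀ x, (p x + q x) * gbin f t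
        + C * ((p x - q x) ^ 2 / (p x + q x) - d * (p x + q x))
        ≤ q x * f (p x / q x) + p x * f (q x / p x) := by
      intro x
      have hpx := hp x; have hqx := hq x
      have hpq : (0:ℝ) < p x + q x := by linarith
      set r : ℝ := (p x - q x) / (p x + q x) with hrdef
      have hrmem : r ∈ Ioo (-1:ℝ) 1 := by
        constructor
        · rw [hrdef, lt_div_iff₀ hpq]; linarith
        · rw [hrdef, div_lt_iff₀ hpq]; linarith
      have htan := tangent f hconv hd1 hf1 mono d ⟨hd0, hdlt⟩ r hrmem
      rw [← hCdef] at htan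
      have hA := pointwiseA f (p x) (q x) hpx hqx
      rw [hA]
      have hr2 : (p x + q x) * r ^ 2 = (p x - q x) ^ 2 / (p x + q x) := by
        rw [hrdef, div_pow]; field_simp
      have hmul := mul_le_mul_of_nonneg_left htan hpq.le
      calc (p x + q x) * gbin f t + C * ((p x - q x) ^ 2 / (p x + q x) - d * (p x + q x))
          = (p x + q x) * gbin f t + C * ((p x + q x) * r ^ 2 - d * (p x + q x)) := by
            rw [hr2]
        _ = (p x + q x) * (gbin f t + C * (r ^ 2 - d)) := by ring
        _ ≤ (p x + q x) * gbin f r := hmul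
    -- integrate the pointwise bound
    have int_pq : Integrable (fun x => p x + q x) μ := hpint.add hqint
    have intG1 : Integrable (fun x => (p x + q x) * gbin f t) μ := int_pq.mul_const _
    have intG2a : Integrable (fun x => d * (p x + q x)) μ := int_pq.const_mul d
    have intG2b : Integrable (fun x => (p x - q x) ^ 2 / (p x + q x) - d * (p x + q x)) μ :=
      hI3.sub intG2a
    have intG2 : Integrable
        (fun x => C * ((p x - q x) ^ 2 / (p x + q x) - d * (p x + q x))) μ :=
      intG2b.const_mul C
    have hGint : Integrable (fun x => (p x + q x) * gbin f t
        + C * ((p x - q x) ^ 2 / (p x + q x) - d * (p x + q x))) μ := intG1.add intG2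
    have hsumint : Integrable (fun x => q x * f (p x / q x) + p x * f (q x / p x)) μ :=
      hI1.add hI2
    have hineq := integral_mono hGint hsumint hpt
    have e_pq : (∫ x, (p x + q x) ∂μ) = 2 := by
      rw [integral_add hpint hqint, hip, hiq]; norm_num
    have eG1 : (∫ x, (p x + q x) * gbin f t ∂μ) = 2 * gbin f t := by
      rw [integral_mul_const, e_pq]
    have eG2a : (∫ x, d * (p x + q x) ∂μ) = 2 * d := by
      rw [integral_const_mul, e_pq]; ring
    have eG2 : (∫ x, C * ((p x - q x) ^ 2 / (p x + q x) - d * (p x + q x)) ∂μ) = 0 := by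
      rw [integral_const_mul, integral_sub hI3 intG2a, hJ3, eG2a]; ring
    rw [integral_add intG1 intG2, eG1, eG2,
      integral_add hI1 hI2] at hineq
    linarith
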